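/- Fix an integer N ≥ 1. The average over the unimodular ensemble of Tr ρ(φ)⁴ equals (14N³ − 28N² + 20N − 5)/N⁶; that is, (1/(2π)^{N²}) ∫_{[0,2π]^{N²}} Tr(ρ(φ)⁴) dφ = (14N³ − 28N² + 20N − 5)/N⁶. -/

import Mathlib

open Matrix MeasureTheory

/-- The unimodular matrix with phases `φ`: entries `exp(i φ_{jk})`. -/
noncomputable def uniMat (N : ℕ) (φ : Fin N × Fin N → ℝ) : Matrix (Fin N) (Fin N) ℂ :=
  Matrix.of fun j k => Complex.exp (Complex.I * (φ (j, k) : ℂ))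

/-- The random-phase density matrix `ρ(φ) = A(φ) A(φ)ᴴ / N²`. -/
noncomputable def uniRho (N : ℕ) (φ : Fin N × Fin N → ℝ) : Matrix (Fin N) (Fin N) ℂ :=
  ((N : ℂ) ^ 2)⁻¹ • (uniMat N φ * (uniMat N φ)ᴴ)

/-!
Expanding the trace, `Tr (A Aᴴ)⁴` is the sum over rows `a, b, c, d` and columns `k₁, …, k₄` of
`A a k₁ · conj (A b k₁) · A b k₂ · conj (A c k₂) · A c k₃ · conj (A d k₃) · A d k₄ · conj (A a k₄)`.
For unimodular `A` each such term is a character `φ ↦ exp (i ⟨n, φ⟩)` of the torus `[0, 2π]^{N²}`,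
whose average is `1` if `n = 0` and `0` otherwise. So `N⁸ ⟨Tr ρ⁴⟩` counts the index tuples with
vanishing exponent vector `n`. For fixed rows this count only depends on which rows coincide, and
summing the fifteen resulting counts over the rows gives `14N⁵ − 28N⁴ + 20N³ − 5N²`.
-/

open Complex Finset

theorem integral_Icc_exp_int_mul (n : ℤ) :
    ∫ x in Set.Icc (0 : ℝ) (2 * Real.pi), exp (I * n * x) =
      if n = 0 then (2 * Real.pi : ℂ) else 0 := by
  rw [integral_Icc_eq_integral_Ioc, ← intervalIntegral.integral_of_le Real.two_pi_pos.le]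
  split_ifs with hn
  · simp [hn]
  · have hn' : I * n ≠ 0 := by simp [hn]
    have hperiod : exp (I * n * (2 * Real.pi : ℝ)) = 1 := by
      rw [← exp_int_mul_two_pi_mul_I n]; push_cast; ring_nf
    push_cast at hperiod
    simp [integral_exp_mul_complex hn', hperiod]

theorem integral_pi_Icc_prod_exp {ι : Type*} [Fintype ι] (n : ι → ℤ) :
    ∫ φ in Set.univ.pi fun _ : ι => Set.Icc (0 : ℝ) (2 * Real.pi), ∏ i, exp (I * n i * φ i) =
      if n = 0 then (2 * Real.pi : ℂ) ^ Fintype.card ι else 0 := by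
  rw [volume_pi, Measure.restrict_pi_pi,
    integral_fintype_prod_eq_prod (fun i (x : ℝ) => exp (I * n i * x))]
  simp only [integral_Icc_exp_int_mul, Fintype.prod_ite_zero, prod_const, card_univ, funext_iff,
    Pi.zero_apply]

theorem Matrix.trace_pow_four {m R : Type*} [Fintype m] [DecidableEq m] [CommSemiring R]
    (X : Matrix m m R) :
    trace (X ^ 4) = ∑ a, ∑ b, ∑ c, ∑ d, X a b * (X b c * (X c d * X d a)) := by
  simp only [pow_succ', pow_zero, mul_one, trace, Matrix.diag, mul_apply, mul_sum]

theorem boole_or {R : Type*} [Ring R] (P Q : Prop) [Decidable P] [Decidable Q] :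
    (if P ∨ Q then (1 : R) else 0) =
      (if P then 1 else 0) + (if Q then 1 else 0) - if P ∧ Q then 1 else 0 := by
  by_cases P <;> by_cases Q <;> simp [*]

theorem sum_boole_congr {ι : Type*} [Fintype ι] {p q : ι → ι → ι → ι → Prop}
    [∀ i j k l, Decidable (p i j k l)] [∀ i j k l, Decidable (q i j k l)]
    (h : ∀ i j k l, p i j k l ↔ q i j k l) :
    ∑ i, ∑ j, ∑ k, ∑ l, (if p i j k l then (1 : ℂ) else 0) =
      ∑ i, ∑ j, ∑ k, ∑ l, if q i j k l then (1 : ℂ) else 0 := by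
  simp only [h]

def kroneckerDelta {α : Type*} [DecidableEq α] (x y : α) : ℂ := if x = y then 1 else 0

section kroneckerDelta

variable {α : Type*} [DecidableEq α] {x y : α}

@[simp]
theorem kroneckerDelta_of_eq (h : x = y) : kroneckerDelta x y = 1 := if_pos h

@[simp]
theorem kroneckerDelta_of_ne (h : x ≠ y) : kroneckerDelta x y = 0 := if_neg h

end kroneckerDelta

section cycleExponent

variable {m n : Type*} [DecidableEq m] [DecidableEq n]

/-- The exponent of `φ p` in the phase of
`A a k₁ * conj (A b k₁) * A b k₂ * conj (A c k₂) * A c k₃ * conj (A d k₃) * A d k₄ * conj (A a k₄)`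
when `A j k = exp (i φ (j, k))`. -/
def cycleExponent (a b c d : m) (k₁ k₂ k₃ k₄ : n) (p : m × n) : ℤ :=
  (if p = (a, k₁) then 1 else 0) + (if p = (b, k₂) then 1 else 0) +
  (if p = (c, k₃) then 1 else 0) + (if p = (d, k₄) then 1 else 0) -
  (if p = (b, k₁) then 1 else 0) - (if p = (c, k₂) then 1 else 0) -
  (if p = (d, k₃) then 1 else 0) - (if p = (a, k₄) then 1 else 0)

variable [Fintype m] [Fintype n]

theorem sum_cycleExponent (a b c d : m) (k₁ k₂ k₃ k₄ : n) :
    ∑ p, cycleExponent a b c d k₁ k₂ k₃ k₄ p = 0 := by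
  simp [cycleExponent, sum_add_distrib, sum_sub_distrib]

/- Off the four points `(a, k₁), (b, k₂), (c, k₃), (d, k₄)` the exponent is nonpositive, and it
sums to zero. -/
theorem cycleExponent_eq_zero_iff (a b c d : m) (k₁ k₂ k₃ k₄ : n) :
    cycleExponent a b c d k₁ k₂ k₃ k₄ = 0 ↔
      cycleExponent a b c d k₁ k₂ k₃ k₄ (a, k₁) = 0 ∧ cycleExponent a b c d k₁ k₂ k₃ k₄ (b, k₂) = 0 ∧
        cycleExponent a b c d k₁ k₂ k₃ k₄ (c, k₃) = 0 ∧
        cycleExponent a b c d k₁ k₂ k₃ k₄ (d, k₄) = 0 := by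
  refine ⟨fun h => by simp [h], fun h => ?_⟩
  have hle : ∀ p, cycleExponent a b c d k₁ k₂ k₃ k₄ p ≤ 0 := by
    intro p
    by_cases hp : p = (a, k₁) ∨ p = (b, k₂) ∨ p = (c, k₃) ∨ p = (d, k₄)
    · rcases hp with rfl | rfl | rfl | rfl <;> simp [h]
    · simp only [not_or] at hp
      simp only [cycleExponent, hp.1, hp.2.1, hp.2.2.1, hp.2.2.2, if_false]
      split_ifs <;> norm_num
  exact funext
    ((sum_eq_zero_iff_of_nonpos fun p _ => hle p).1 (sum_cycleExponent ..) · (mem_univ _))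

theorem exp_cycle_eq_prod_exp (φ : m × n → ℝ) (a b c d : m) (k₁ k₂ k₃ k₄ : n) :
    exp (I * (φ (a, k₁) - φ (b, k₁))) * (exp (I * (φ (b, k₂) - φ (c, k₂))) *
        (exp (I * (φ (c, k₃) - φ (d, k₃))) * exp (I * (φ (d, k₄) - φ (a, k₄))))) =
      ∏ p, exp (I * cycleExponent a b c d k₁ k₂ k₃ k₄ p * φ p) := by
  rw [← exp_sum, ← exp_add, ← exp_add, ← exp_add]
  congr 1
  simp only [cycleExponent]
  push_cast
  simp only [mul_sub, mul_add, mul_ite, mul_one, mul_zero, sub_mul, add_mul, ite_mul, zero_mul,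
    sum_sub_distrib, sum_add_distrib, sum_ite_eq', mem_univ, ↓reduceIte]
  ring

end cycleExponent

variable {N : ℕ}

theorem uniMat_mul_conjTranspose_apply (φ : Fin N × Fin N → ℝ) (a b : Fin N) :
    (uniMat N φ * (uniMat N φ)ᴴ) a b = ∑ k, exp (I * (φ (a, k) - φ (b, k))) := by
  simp [mul_apply, uniMat, ← exp_conj, ← exp_add, sub_eq_add_neg, mul_add]

theorem trace_uniRho_pow_four (φ : Fin N × Fin N → ℝ) :
    trace (uniRho N φ ^ 4) = ((N : ℂ) ^ 2)⁻¹ ^ 4 * ∑ a, ∑ b, ∑ c, ∑ d, ∑ k₁, ∑ k₂, ∑ k₃, ∑ k₄,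
      ∏ p, exp (I * cycleExponent a b c d k₁ k₂ k₃ k₄ p * φ p) := by
  rw [uniRho, smul_pow, trace_smul, smul_eq_mul, trace_pow_four]
  simp only [uniMat_mul_conjTranspose_apply, sum_mul]
  simp only [mul_sum, exp_cycle_eq_prod_exp]

/-- The number of `(k₁, k₂, k₃, k₄)` with `cycleExponent a b c d k₁ k₂ k₃ k₄ = 0`, interpolated over
the fifteen coincidence patterns of the rows by a polynomial in their Kronecker deltas. -/
def cycleCount (N : ℕ) (a b c d : Fin N) : ℂ :=
  N + (N ^ 2 - N) * (kroneckerDelta a b + kroneckerDelta a c + kroneckerDelta a d +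
      kroneckerDelta b c + kroneckerDelta b d + kroneckerDelta c d) +
    (N ^ 3 - 2 * N ^ 2 + N) *
      (kroneckerDelta a b * kroneckerDelta c d + kroneckerDelta a d * kroneckerDelta b c) +
    (N ^ 3 - 3 * N ^ 2 + 2 * N) *
      (kroneckerDelta a b * kroneckerDelta b c + kroneckerDelta b c * kroneckerDelta c d +
        kroneckerDelta c d * kroneckerDelta a d + kroneckerDelta a d * kroneckerDelta a b) +
    (N ^ 4 - 6 * N ^ 3 + 10 * N ^ 2 - 5 * N) *
      (kroneckerDelta a b * kroneckerDelta b c * kroneckerDelta c d)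

/- In each case, a row occurring at a single position `i` forces `kᵢ₋₁ = kᵢ` (indices mod 4), and
a row repeated at two positions forces an equality of the two multisets of neighbouring columns. -/
theorem sum_boole_cycleExponent_eq_zero_of_eq {a b : Fin N} (c d : Fin N) (hab : a = b) :
    ∑ k₁ : Fin N, ∑ k₂, ∑ k₃, ∑ k₄, (if cycleExponent a b c d k₁ k₂ k₃ k₄ = 0 then (1 : ℂ) else 0) =
      cycleCount N a b c d := by
  simp only [cycleExponent_eq_zero_iff, cycleExponent, Prod.mk.injEq]
  rcases eq_or_ne a c with hac | hac
  · rcases eq_or_ne a d with had | had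
    · rw [sum_boole_congr (q := fun k₁ k₂ k₃ k₄ => True) (by grind)]
      simp (disch := grind) [cycleCount]
      ring
    · rw [sum_boole_congr (q := fun k₁ k₂ k₃ k₄ => k₄ = k₃) (by grind)]
      simp (disch := grind) [cycleCount]
      ring
  · rcases eq_or_ne a d with had | had
    · rw [sum_boole_congr (q := fun k₁ k₂ k₃ k₄ => k₃ = k₂) (by grind)]
      simp (disch := grind) [cycleCount]
      ring
    · rcases eq_or_ne c d with hcd | hcd
      · rw [sum_boole_congr (q := fun k₁ k₂ k₃ k₄ => k₂ = k₄) (by grind)]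
        simp (disch := grind) [cycleCount]
        ring
      · rw [sum_boole_congr (q := fun k₁ k₂ k₃ k₄ => k₃ = k₂ ∧ k₄ = k₃) (by grind)]
        simp (disch := grind) [cycleCount, ite_and]
        ring

theorem sum_boole_cycleExponent_eq_zero_of_ne {a b : Fin N} (c d : Fin N) (hab : a ≠ b) :
    ∑ k₁ : Fin N, ∑ k₂, ∑ k₃, ∑ k₄, (if cycleExponent a b c d k₁ k₂ k₃ k₄ = 0 then (1 : ℂ) else 0) =
      cycleCount N a b c d := by
  simp only [cycleExponent_eq_zero_iff, cycleExponent, Prod.mk.injEq]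
  rcases eq_or_ne a c with hac | hac
  · rcases eq_or_ne a d with had | had
    · rw [sum_boole_congr (q := fun k₁ k₂ k₃ k₄ => k₂ = k₁) (by grind)]
      simp (disch := grind) [cycleCount]
      ring
    · rcases eq_or_ne b d with hbd | hbd
      · rw [sum_boole_congr
          (q := fun k₁ k₂ k₃ k₄ => k₁ = k₄ ∧ k₃ = k₂ ∨ k₁ = k₂ ∧ k₃ = k₄) (by grind)]
        simp (disch := grind) [cycleCount, ite_and, boole_or, sum_add_distrib, sum_sub_distrib]
        ring
      · rw [sum_boole_congr (q := fun k₁ k₂ k₃ k₄ => k₂ = k₁ ∧ k₄ = k₃) (by grind)]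
        simp (disch := grind) [cycleCount, ite_and]
        ring
  · rcases eq_or_ne a d with had | had
    · rcases eq_or_ne b c with hbc | hbc
      · rw [sum_boole_congr (q := fun k₁ k₂ k₃ k₄ => k₁ = k₃) (by grind)]
        simp (disch := grind) [cycleCount]
        ring
      · rw [sum_boole_congr (q := fun k₁ k₂ k₃ k₄ => k₂ = k₁ ∧ k₃ = k₂) (by grind)]
        simp (disch := grind) [cycleCount, ite_and]
        ring
    · rcases eq_or_ne b c with hbc | hbc
      · rcases eq_or_ne b d with hbd | hbd
        · rw [sum_boole_congr (q := fun k₁ k₂ k₃ k₄ => k₁ = k₄) (by grind)]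
          simp (disch := grind) [cycleCount]
          ring
        · rw [sum_boole_congr (q := fun k₁ k₂ k₃ k₄ => k₁ = k₄ ∧ k₄ = k₃) (by grind)]
          simp (disch := grind) [cycleCount, ite_and]
          ring
      · rcases eq_or_ne b d with hbd | hbd
        · rw [sum_boole_congr (q := fun k₁ k₂ k₃ k₄ => k₁ = k₄ ∧ k₃ = k₂) (by grind)]
          simp (disch := grind) [cycleCount, ite_and]
          ring
        · rcases eq_or_ne c d with hcd | hcd
          · rw [sum_boole_congr (q := fun k₁ k₂ k₃ k₄ => k₂ = k₁ ∧ k₁ = k₄) (by grind)]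
            simp (disch := grind) [cycleCount, ite_and]
            ring
          · rw [sum_boole_congr (q := fun k₁ k₂ k₃ k₄ => k₁ = k₂ ∧ k₂ = k₃ ∧ k₃ = k₄) (by grind)]
            simp (disch := grind) [cycleCount, ite_and]

theorem sum_boole_cycleExponent_eq_zero (a b c d : Fin N) :
    ∑ k₁ : Fin N, ∑ k₂, ∑ k₃, ∑ k₄, (if cycleExponent a b c d k₁ k₂ k₃ k₄ = 0 then (1 : ℂ) else 0) =
      cycleCount N a b c d := by
  rcases eq_or_ne a b with hab | hab
  exacts [sum_boole_cycleExponent_eq_zero_of_eq c d hab,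
    sum_boole_cycleExponent_eq_zero_of_ne c d hab]

theorem sum_cycleCount (N : ℕ) :
    ∑ a, ∑ b, ∑ c, ∑ d, cycleCount N a b c d =
      14 * N ^ 5 - 28 * N ^ 4 + 20 * N ^ 3 - 5 * N ^ 2 := by
  simp only [cycleCount, kroneckerDelta, mul_add, mul_ite, mul_one, mul_zero, sum_add_distrib,
    sum_const, card_univ, Fintype.card_fin, nsmul_eq_mul, smul_add, smul_ite, sum_ite_eq, mem_univ,
    ↓reduceIte, sum_ite_irrel, sum_ite_eq']
  ring

theorem avg_fourth_moment_unimodular (N : ℕ) :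
    ((2 * Real.pi : ℂ) ^ (N ^ 2))⁻¹ *
        ∫ φ in Set.univ.pi fun _ : Fin N × Fin N => Set.Icc (0 : ℝ) (2 * Real.pi),
          Matrix.trace (uniRho N φ ^ 4) =
      (14 * N ^ 3 - 28 * N ^ 2 + 20 * N - 5) / (N : ℂ) ^ 6 := by
  have integrable_of_continuous : ∀ f : (Fin N × Fin N → ℝ) → ℂ, Continuous f →
      Integrable f (volume.restrict (Set.univ.pi fun _ => Set.Icc 0 (2 * Real.pi))) :=
    fun _ hf => hf.continuousOn.integrableOn_compact (isCompact_univ_pi fun _ => isCompact_Icc)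
  have hboole : ∀ (P : Prop) [Decidable P],
      (if P then (2 * Real.pi : ℂ) ^ N ^ 2 else 0) =
        (2 * Real.pi : ℂ) ^ N ^ 2 * if P then 1 else 0 :=
    fun _ _ => (mul_boole ..).symm
  simp only [trace_uniRho_pow_four]
  rw [integral_const_mul]
  simp (disch := intro _ _; apply integrable_of_continuous; fun_prop) only
    [integral_finsetSum, integral_pi_Icc_prod_exp]
  simp only [Fintype.card_prod, Fintype.card_fin, ← sq, hboole, ← mul_sum,
    sum_boole_cycleExponent_eq_zero, sum_cycleCount]
  rcases eq_or_ne N 0 with rfl | hN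
  · simp
  · have hpi : (2 * Real.pi : ℂ) ≠ 0 := by simp [Real.pi_ne_zero]
    field_simp
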